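/- Let ω = e^{2πi/3} and let A ⊆ GL(3,ℂ) be the abelian group generated by g₁ = diag(1,ω,ω²) and the scalar matrix ωI (so A ≅ ℤ/3 × ℤ/3), acting on ℂ[X,Y,Z] by linear substitution. Then the invariant ring ℂ[X,Y,Z]^A is isomorphic, as a ℂ-algebra, to ℂ[x,y,z,w]/(x³ − yzw), via the map sending x ↦ XYZ, y ↦ X³, z ↦ Y³, w ↦ Z³. -/

import Mathlib

noncomputable section
open MvPolynomial Complex

/-- ω = e^{2πi/3}, a primitive cube root of unity. -/
def ω : ℂ := Complex.exp (2 * Real.pi * Complex.I / 3)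

/-- g₁ = diag(1, ω, ω²). -/
def g₁ : Matrix (Fin 3) (Fin 3) ℂ := Matrix.diagonal ![1, ω, ω ^ 2]

/-- A ≅ ℤ/3 × ℤ/3, the abelian group of matrices generated by g₁ and the scalar
matrix ωI (both of order 3, so the multiplicative closure is already a group). -/
def A : Submonoid (Matrix (Fin 3) (Fin 3) ℂ) :=
  Submonoid.closure {g₁, ω • (1 : Matrix (Fin 3) (Fin 3) ℂ)}

/-- the action of a 3×3 matrix on ℂ[X,Y,Z] by linear substitution of the variables. -/
def act (g : Matrix (Fin 3) (Fin 3) ℂ) :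
    MvPolynomial (Fin 3) ℂ →ₐ[ℂ] MvPolynomial (Fin 3) ℂ :=
  aeval (fun i => ∑ j, C (g i j) * X j)

/-- the invariant ring ℂ[X,Y,Z]^A. -/
def invariants : Subalgebra ℂ (MvPolynomial (Fin 3) ℂ) where
  carrier := {p | ∀ g ∈ A, act g p = p}
  mul_mem' := fun ha hb g hg => by rw [map_mul, ha g hg, hb g hg]
  one_mem' := fun g hg => map_one (act g)
  add_mem' := fun ha hb g hg => by rw [map_add, ha g hg, hb g hg]
  zero_mem' := fun g hg => map_zero (act g)
  algebraMap_mem' := fun r g hg => (act g).commutes r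

/-- the images of (x, y, z, w): x ↦ XYZ, y ↦ X³, z ↦ Y³, w ↦ Z³.  Variables of
ℂ[x,y,z,w] are x = X 0, y = X 1, z = X 2, w = X 3. -/
def fvec : Fin 4 → MvPolynomial (Fin 3) ℂ :=
  ![X 0 * X 1 * X 2, X 0 ^ 3, X 1 ^ 3, X 2 ^ 3]

/-- x³ − yzw in ℂ[x,y,z,w]. -/
def Grel : MvPolynomial (Fin 4) ℂ := X 0 ^ 3 - X 1 * X 2 * X 3

/-!
Both generators of `A` are diagonal, so they scale every monomial: `g₁` and `ωI` multiply
`X^m₀ Y^m₁ Z^m₂` by `ω ^ (m₁ + 2 m₂)` and `ω ^ (m₀ + m₁ + m₂)`. Hence a polynomial is invariant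
iff every exponent in its support satisfies `m₀ ≡ m₁ ≡ m₂ (mod 3)`, and these are exactly the
exponents of the images `(XYZ)^a X^(3b) Y^(3c) Z^(3d)` of the monomials `x^a y^b z^c w^d`,
which gives surjectivity of `f = aeval fvec`. Taking `a < 3` defines a linear section `s` of `f`
on invariants, and `p - s (f p) ∈ (x³ - yzw)` for every `p` because `x³ - yzw` divides
`(x³)^k - (yzw)^k`; so the kernel is `(x³ - yzw)`.
-/

lemma isPrimitiveRoot_ω : IsPrimitiveRoot ω 3 := by
  unfold ω
  convert Complex.isPrimitiveRoot_exp 3 (by norm_num) using 3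
  norm_num

lemma act_X (g : Matrix (Fin 3) (Fin 3) ℂ) (i : Fin 3) :
    act g (X i) = ∑ j, C (g i j) * X j :=
  aeval_X _ _

lemma act_C (g : Matrix (Fin 3) (Fin 3) ℂ) (a : ℂ) : act g (C a) = C a :=
  (act g).commutes a

lemma act_mul (g h : Matrix (Fin 3) (Fin 3) ℂ) : act (g * h) = (act h).comp (act g) := by
  refine algHom_ext fun i => ?_
  simp only [AlgHom.comp_apply, act_X, map_sum, map_mul, act_C, Matrix.mul_apply,
    Finset.sum_mul, Finset.mul_sum]
  rw [Finset.sum_comm]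
  exact Finset.sum_congr rfl fun _ _ => Finset.sum_congr rfl fun _ _ => by ring

lemma act_one : act 1 = AlgHom.id ℂ (MvPolynomial (Fin 3) ℂ) :=
  algHom_ext fun i => by simp [act_X, Matrix.one_apply, apply_ite C, ite_mul]

lemma act_eq_self_of_mem_closure {S : Set (Matrix (Fin 3) (Fin 3) ℂ)}
    {p : MvPolynomial (Fin 3) ℂ} (h : ∀ g ∈ S, act g p = p) {g : Matrix (Fin 3) (Fin 3) ℂ}
    (hg : g ∈ Submonoid.closure S) : act g p = p := by
  induction hg using Submonoid.closure_induction with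
  | mem x hx => exact h x hx
  | one => rw [act_one, AlgHom.id_apply]
  | mul x y _ _ hx hy => rw [act_mul, AlgHom.comp_apply, hx, hy]

lemma act_diagonal_monomial (d : Fin 3 → ℂ) (m : Fin 3 →₀ ℕ) (c : ℂ) :
    act (Matrix.diagonal d) (monomial m c) = monomial m ((∏ i, d i ^ m i) * c) := by
  have hX : ∀ i, act (Matrix.diagonal d) (X i) = C (d i) * X i := fun i => by
    simp [act_X, Matrix.diagonal_apply, apply_ite C, ite_mul]
  rw [monomial_eq, monomial_eq, Finsupp.prod_pow, map_mul, act_C, map_prod]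
  simp only [map_pow, hX, mul_pow, Finset.prod_mul_distrib]
  simp only [C_mul, map_prod, map_pow]
  ring

lemma coeff_act_diagonal (d : Fin 3 → ℂ) (p : MvPolynomial (Fin 3) ℂ) (m : Fin 3 →₀ ℕ) :
    coeff m (act (Matrix.diagonal d) p) = (∏ i, d i ^ m i) * coeff m p := by
  induction p using induction_on' with
  | monomial n c =>
    rw [act_diagonal_monomial, coeff_monomial, coeff_monomial]
    split_ifs with h
    · rw [h]
    · rw [mul_zero]
  | add p q hp hq => rw [map_add, coeff_add, coeff_add, hp, hq, mul_add]

lemma act_diagonal_eq_self_iff (d : Fin 3 → ℂ) (p : MvPolynomial (Fin 3) ℂ) :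
    act (Matrix.diagonal d) p = p ↔ ∀ m ∈ p.support, ∏ i, d i ^ m i = 1 := by
  simp only [MvPolynomial.ext_iff, coeff_act_diagonal, mem_support_iff]
  refine forall_congr' fun m => ?_
  constructor
  · intro h hm
    exact mul_right_cancel₀ hm (h.trans (one_mul _).symm)
  · intro h
    by_cases hm : coeff m p = 0
    · rw [hm, mul_zero]
    · rw [h hm, one_mul]

def IsInvariantExponent (m : Fin 3 →₀ ℕ) : Prop :=
  3 ∣ m 1 + 2 * m 2 ∧ 3 ∣ m 0 + m 1 + m 2

lemma mem_invariants_iff_generators {p : MvPolynomial (Fin 3) ℂ} :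
    p ∈ invariants ↔ act g₁ p = p ∧ act (ω • 1) p = p := by
  refine ⟨fun hp => ⟨hp _ (Submonoid.subset_closure (by simp)),
    hp _ (Submonoid.subset_closure (by simp))⟩, fun ⟨h₁, h₂⟩ g hg => ?_⟩
  refine act_eq_self_of_mem_closure ?_ hg
  rintro _ (rfl | rfl)
  exacts [h₁, h₂]

lemma mem_invariants_iff {p : MvPolynomial (Fin 3) ℂ} :
    p ∈ invariants ↔ ∀ m ∈ p.support, IsInvariantExponent m := by
  rw [mem_invariants_iff_generators, g₁, Matrix.smul_one_eq_diagonal,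
    act_diagonal_eq_self_iff, act_diagonal_eq_self_iff, ← forall₂_and]
  refine forall₂_congr fun m _ => ?_
  simp only [Fin.prod_univ_three, Matrix.cons_val_zero, Matrix.cons_val_one, Matrix.cons_val_two,
    Matrix.head_cons, Matrix.tail_cons, one_pow, one_mul, ← pow_mul, ← pow_add,
    isPrimitiveRoot_ω.pow_eq_one_iff_dvd, IsInvariantExponent]

def fvecExponent (n : Fin 4 →₀ ℕ) : Fin 3 →₀ ℕ :=
  Finsupp.equivFunOnFinite.symm ![n 0 + 3 * n 1, n 0 + 3 * n 2, n 0 + 3 * n 3]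

def fvecExponentLift (m : Fin 3 →₀ ℕ) : Fin 4 →₀ ℕ :=
  Finsupp.equivFunOnFinite.symm ![m 0 % 3, m 0 / 3, m 1 / 3, m 2 / 3]

lemma isInvariantExponent_fvecExponent (n : Fin 4 →₀ ℕ) :
    IsInvariantExponent (fvecExponent n) := by
  simp only [IsInvariantExponent, fvecExponent, Finsupp.equivFunOnFinite_symm_apply_apply,
    Matrix.cons_val_zero, Matrix.cons_val_one, Matrix.cons_val]
  omega

lemma fvecExponent_fvecExponentLift {m : Fin 3 →₀ ℕ} (hm : IsInvariantExponent m) :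
    fvecExponent (fvecExponentLift m) = m := by
  obtain ⟨h₁, h₂⟩ := hm
  ext i
  fin_cases i <;>
    simp only [fvecExponent, fvecExponentLift, Finsupp.equivFunOnFinite_symm_apply_apply,
      Matrix.cons_val_zero, Matrix.cons_val_one, Matrix.cons_val, Fin.zero_eta, Fin.mk_one,
      Fin.reduceFinMk] <;> omega

lemma aeval_fvec_monomial (n : Fin 4 →₀ ℕ) (c : ℂ) :
    aeval fvec (monomial n c) = monomial (fvecExponent n) c := by
  rw [aeval_monomial, monomial_eq, Finsupp.prod_pow, Finsupp.prod_pow, Fin.prod_univ_four,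
    Fin.prod_univ_three]
  simp only [fvec, fvecExponent, algebraMap_eq, Matrix.cons_val_zero, Matrix.cons_val_one,
    Matrix.cons_val, Finsupp.equivFunOnFinite_symm_apply_apply]
  ring

lemma monomial_eq_C_mul_prod_X_pow (n : Fin 4 →₀ ℕ) (c : ℂ) :
    (monomial n c : MvPolynomial (Fin 4) ℂ) =
      C c * (X 0 ^ n 0 * X 1 ^ n 1 * X 2 ^ n 2 * X 3 ^ n 3) := by
  rw [monomial_eq, Finsupp.prod_pow, Fin.prod_univ_four]

lemma monomial_sub_monomial_fvecExponentLift_mem (n : Fin 4 →₀ ℕ) (c : ℂ) :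
    monomial n c - monomial (fvecExponentLift (fvecExponent n)) c ∈ Ideal.span {Grel} := by
  obtain ⟨k, r, hn⟩ : ∃ k r, n 0 = 3 * k + r ∧ r = n 0 % 3 := ⟨n 0 / 3, n 0 % 3, by omega, rfl⟩
  have hlift : fvecExponentLift (fvecExponent n) =
      Finsupp.equivFunOnFinite.symm ![r, n 1 + k, n 2 + k, n 3 + k] := by
    ext i
    fin_cases i <;>
      simp only [fvecExponent, fvecExponentLift, Finsupp.equivFunOnFinite_symm_apply_apply,
        Matrix.cons_val_zero, Matrix.cons_val_one, Matrix.cons_val, Fin.zero_eta, Fin.mk_one,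
        Fin.reduceFinMk] <;> omega
  have key : monomial n c - monomial (fvecExponentLift (fvecExponent n)) c =
      C c * X 0 ^ r * X 1 ^ n 1 * X 2 ^ n 2 * X 3 ^ n 3 *
        ((X 0 ^ 3) ^ k - (X 1 * X 2 * X 3) ^ k) := by
    rw [monomial_eq_C_mul_prod_X_pow, monomial_eq_C_mul_prod_X_pow, hlift, hn.1]
    simp only [Finsupp.equivFunOnFinite_symm_apply_apply, Matrix.cons_val_zero,
      Matrix.cons_val_one, Matrix.cons_val]
    ring
  rw [key, Ideal.mem_span_singleton, Grel]
  exact dvd_mul_of_dvd_right (sub_dvd_pow_sub_pow _ _ _) _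

lemma aeval_fvec_mem_invariants (p : MvPolynomial (Fin 4) ℂ) : aeval fvec p ∈ invariants := by
  induction p using induction_on' with
  | monomial n c =>
    rw [aeval_fvec_monomial, mem_invariants_iff]
    intro m hm
    rw [Finset.mem_singleton.mp (support_monomial_subset hm)]
    exact isInvariantExponent_fvecExponent n
  | add p q hp hq => rw [map_add]; exact add_mem hp hq

def fvecLift : MvPolynomial (Fin 3) ℂ →ₗ[ℂ] MvPolynomial (Fin 4) ℂ :=
  (basisMonomials (Fin 3) ℂ).constr ℂ fun m => monomial (fvecExponentLift m) 1

lemma fvecLift_monomial (m : Fin 3 →₀ ℕ) (c : ℂ) :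
    fvecLift (monomial m c) = monomial (fvecExponentLift m) c := by
  rw [← mul_one c, ← smul_eq_mul, ← smul_monomial, ← smul_monomial, map_smul]
  exact congrArg (c • ·) ((basisMonomials (Fin 3) ℂ).constr_basis ℂ _ m)

lemma aeval_fvec_fvecLift {p : MvPolynomial (Fin 3) ℂ} (hp : p ∈ invariants) :
    aeval fvec (fvecLift p) = p := by
  calc aeval fvec (fvecLift p)
      = ∑ m ∈ p.support, aeval fvec (fvecLift (monomial m (coeff m p))) := by
        rw [← map_sum, ← map_sum, ← p.as_sum]
    _ = ∑ m ∈ p.support, monomial m (coeff m p) := Finset.sum_congr rfl fun m hm => by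
        rw [fvecLift_monomial, aeval_fvec_monomial,
          fvecExponent_fvecExponentLift (mem_invariants_iff.mp hp m hm)]
    _ = p := p.as_sum.symm

lemma sub_fvecLift_aeval_fvec_mem (p : MvPolynomial (Fin 4) ℂ) :
    p - fvecLift (aeval fvec p) ∈ Ideal.span {Grel} := by
  induction p using induction_on' with
  | monomial n c =>
    rw [aeval_fvec_monomial, fvecLift_monomial]
    exact monomial_sub_monomial_fvecExponentLift_mem n c
  | add p q hp hq =>
    rw [map_add, map_add, add_sub_add_comm]
    exact add_mem hp hq

lemma aeval_fvec_Grel : aeval fvec Grel = 0 := by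
  simp only [Grel, fvec, map_sub, map_pow, map_mul, aeval_X, Matrix.cons_val_zero,
    Matrix.cons_val_one, Matrix.cons_val]
  ring

def toInvariants : MvPolynomial (Fin 4) ℂ →ₐ[ℂ] invariants :=
  (aeval fvec).codRestrict invariants aeval_fvec_mem_invariants

lemma toInvariants_surjective : Function.Surjective toInvariants :=
  fun p => ⟨fvecLift p, Subtype.ext (aeval_fvec_fvecLift p.2)⟩

lemma ker_toInvariants : RingHom.ker toInvariants = Ideal.span {Grel} := by
  ext p
  have hker : p ∈ RingHom.ker toInvariants ↔ aeval fvec p = 0 := by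
    rw [RingHom.mem_ker, ← Subtype.coe_inj]
    rfl
  rw [hker]
  constructor
  · intro hp
    simpa only [hp, map_zero, sub_zero] using sub_fvecLift_aeval_fvec_mem p
  · intro hp
    obtain ⟨q, rfl⟩ := Ideal.mem_span_singleton.mp hp
    rw [map_mul, aeval_fvec_Grel, zero_mul]

/-- ℂ[X,Y,Z]^{ℤ/3×ℤ/3} ≅ ℂ[x,y,z,w]/(x³−yzw) via x ↦ XYZ, y ↦ X³, z ↦ Y³, w ↦ Z³. -/
theorem abelian_invariant_ring_iso :
    ∃ e : (MvPolynomial (Fin 4) ℂ ⧸ Ideal.span {Grel}) ≃ₐ[ℂ] invariants,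
      ∀ p : MvPolynomial (Fin 4) ℂ,
        ((e (Ideal.Quotient.mk (Ideal.span {Grel}) p) : invariants) :
          MvPolynomial (Fin 3) ℂ) = aeval fvec p :=
  ⟨(Ideal.quotientEquivAlgOfEq ℂ ker_toInvariants.symm).trans
    (Ideal.quotientKerAlgEquivOfSurjective toInvariants_surjective), fun _ => rfl⟩
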